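/- arXiv:2509.15201 — 4 statements merged into one kernel-verified Lean document; each statement's English description precedes it below -/
import Mathlib

section
/- Let G and H be finite simple graphs on m and p vertices respectively, each having at least one edge, with adjacency matrices A_G and A_H. Let M be the (m+p)×(m+p) block-diagonal matrix with blocks A_G and A_H (the adjacency matrix of the disjoint union G ⊔ H). Then sSup {t ∈ ℝ : J_{m+p} − t·M ∈ SPN_{m+p}} = min( sSup {t ∈ ℝ : J_m − t·A_G ∈ SPN_m}, sSup {t ∈ ℝ : J_p − t·A_H ∈ SPN_p} ), where J_s denotes the s×s all-ones matrix; that is, σ(G ⊔ H) = min(σ(G), σ(H)). -/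
open Matrix
open scoped ComplexOrder

noncomputable section

/-- The off-diagonal part of a square matrix (diagonal set to zero). -/
def offd {ι : Type*} [DecidableEq ι] {R : Type*} [Zero R] (M : Matrix ι ι R) : Matrix ι ι R :=
  Matrix.of fun i j => if i = j then 0 else M i j

/-- A real symmetric matrix is copositive if `⟨x, M x⟩ ≥ 0` for all entrywise nonnegative `x`. -/
def Copositive {ι : Type*} [Fintype ι] (M : Matrix ι ι ℝ) : Prop :=
  ∀ x : ι → ℝ, (∀ i, 0 ≤ x i) → 0 ≤ x ⬝ᵥ (M *ᵥ x)

/-- The pair `(A, B)` is pairwise copositive. -/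
def PairCopos {ι : Type*} [Fintype ι] [DecidableEq ι]
    (A : Matrix ι ι ℝ) (B : Matrix ι ι ℂ) : Prop :=
  ∀ v w : ι → ℂ,
    0 ≤ (star (fun i => v i * star (v i)) ⬝ᵥ ((A.map Complex.ofReal) *ᵥ fun i => w i * star (w i))
        + star (fun i => v i * w i) ⬝ᵥ ((offd B) *ᵥ fun i => v i * w i)).re

/-- `M ∈ SPN`: sum of a real PSD matrix and a symmetric entrywise nonnegative matrix. -/
def SPN {ι : Type*} [Fintype ι] [DecidableEq ι] (M : Matrix ι ι ℝ) : Prop :=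
  ∃ P E : Matrix ι ι ℝ, M = P + E ∧ P.PosSemidef ∧ E.IsSymm ∧ ∀ i j, 0 ≤ E i j

/-- The pair `(A, B)` is pairwise decomposable. -/
def PairDecomp {ι : Type*} [Fintype ι] [DecidableEq ι]
    (A : Matrix ι ι ℝ) (B : Matrix ι ι ℂ) : Prop :=
  ∃ B1 B2 : Matrix ι ι ℂ, B = B1 + B2 ∧ B1.PosSemidef ∧ B2.IsHermitian ∧
    (∀ i, 0 ≤ (B2 i i).re) ∧ ∀ i j, i ≠ j → ‖B2 i j‖ ^ 2 ≤ A i j * A j i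

section Helpers

variable {ι : Type*} [Fintype ι] [DecidableEq ι]

lemma spn_of_nonneg {M : Matrix ι ι ℝ} (hs : M.IsSymm) (hn : ∀ i j, 0 ≤ M i j) : SPN M :=
  ⟨0, M, by simp, Matrix.PosSemidef.zero, hs, hn⟩

lemma spn_add_nonneg {M N : Matrix ι ι ℝ} (hM : SPN M) (hs : N.IsSymm)
    (hn : ∀ i j, 0 ≤ N i j) : SPN (M + N) := by
  obtain ⟨P, E, rfl, hP, hE, hEn⟩ := hM
  exact ⟨P, E + N, (add_assoc _ _ _), hP, hE.add hs,
    fun i j => add_nonneg (hEn i j) (hn i j)⟩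

lemma spn_quad {M : Matrix ι ι ℝ} (hM : SPN M) (x : ι → ℝ) (hx : ∀ i, 0 ≤ x i) :
    0 ≤ x ⬝ᵥ (M *ᵥ x) := by
  obtain ⟨P, E, rfl, hP, hE, hEn⟩ := hM
  rw [add_mulVec, dotProduct_add]
  refine add_nonneg ?_ ?_
  · simpa using hP.dotProduct_mulVec_nonneg x
  · refine Finset.sum_nonneg fun i _ => mul_nonneg (hx i) ?_
    exact Finset.sum_nonneg fun j _ => mul_nonneg (hEn i j) (hx j)

lemma spn_submatrix {κ : Type*} [Fintype κ] [DecidableEq κ] (e : κ → ι)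
    {M : Matrix ι ι ℝ} (hM : SPN M) : SPN (M.submatrix e e) := by
  obtain ⟨P, E, rfl, hP, hE, hEn⟩ := hM
  exact ⟨P.submatrix e e, E.submatrix e e, by ext i j; simp,
    hP.submatrix e, hE.submatrix e, fun i j => hEn _ _⟩

/-- The set of admissible `t` for a symmetric nonnegative `A` is downward closed. -/
lemma spn_downward {A : Matrix ι ι ℝ} (hA : A.IsSymm) (hAn : ∀ i j, 0 ≤ A i j)
    {s t : ℝ} (hst : s ≤ t)
    (h : SPN ((Matrix.of fun _ _ => (1 : ℝ)) - t • A)) :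
    SPN ((Matrix.of fun _ _ => (1 : ℝ)) - s • A) := by
  have hrw : (Matrix.of fun _ _ => (1 : ℝ)) - s • A
      = ((Matrix.of fun _ _ => (1 : ℝ)) - t • A) + (t - s) • A := by
    ext i j
    simp [Matrix.sub_apply, Matrix.smul_apply, Matrix.add_apply]
    ring
  rw [hrw]
  exact spn_add_nonneg h (hA.smul _)
    fun i j => mul_nonneg (sub_nonneg.2 hst) (hAn i j)

end Helpers

section GraphHelpers

variable {n : ℕ} (G : SimpleGraph (Fin n)) [DecidableRel G.Adj]

/-- `1` is always admissible for an adjacency matrix. -/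
lemma one_mem_spn : SPN ((Matrix.of fun _ _ => (1 : ℝ)) - (1 : ℝ) • G.adjMatrix ℝ) := by
  refine spn_of_nonneg (Matrix.IsSymm.sub ?_ ((G.isSymm_adjMatrix).smul _)) ?_
  · exact Matrix.IsSymm.ext fun i j => rfl
  · intro i j
    simp only [Matrix.sub_apply, Matrix.smul_apply, Matrix.of_apply,
      SimpleGraph.adjMatrix_apply, smul_eq_mul, one_mul]
    by_cases h : G.Adj i j <;> simp [h]

/-- If `G` has an edge, admissible `t` are at most `2`. -/
lemma spn_le_two {u v : Fin n} (huv : G.Adj u v) {t : ℝ}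
    (h : SPN ((Matrix.of fun _ _ => (1 : ℝ)) - t • G.adjMatrix ℝ)) : t ≤ 2 := by
  set M := (Matrix.of fun _ _ => (1 : ℝ)) - t • G.adjMatrix ℝ with hM
  set x : Fin n → ℝ := Pi.single u 1 + Pi.single v 1 with hx
  have hxn : ∀ i, 0 ≤ x i := by
    intro i
    simp only [hx, Pi.add_apply, Pi.single_apply]
    split <;> split <;> norm_num
  have hq := spn_quad h x hxn
  have hmv : x ⬝ᵥ (M *ᵥ x) = M u u + M u v + M v u + M v v := by
    simp only [hx, mulVec_add, dotProduct_add, add_dotProduct,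
      Matrix.mulVec_single_one, single_dotProduct, Matrix.col_apply, mul_one, one_mul]
    ring
  have hne : u ≠ v := G.ne_of_adj huv
  have hMuu : M u u = 1 := by
    simp [hM, Matrix.sub_apply, Matrix.smul_apply]
  have hMvv : M v v = 1 := by
    simp [hM, Matrix.sub_apply, Matrix.smul_apply]
  have hMuv : M u v = 1 - t := by
    simp [hM, Matrix.sub_apply, Matrix.smul_apply, huv]
  have hMvu : M v u = 1 - t := by
    simp [hM, Matrix.sub_apply, Matrix.smul_apply, huv.symm]
  rw [hmv, hMuu, hMvv, hMuv, hMvu] at hq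
  linarith

end GraphHelpers

theorem stmt16 {m p : ℕ} (G : SimpleGraph (Fin m)) (H : SimpleGraph (Fin p))
    [DecidableRel G.Adj] [DecidableRel H.Adj]
    (hG : ∃ u v, G.Adj u v) (hH : ∃ u v, H.Adj u v) :
    sSup {t : ℝ | SPN ((Matrix.of fun _ _ => (1 : ℝ))
        - t • (Matrix.fromBlocks (G.adjMatrix ℝ) 0 0 (H.adjMatrix ℝ)))}
      = min (sSup {t : ℝ | SPN ((Matrix.of fun _ _ => (1 : ℝ)) - t • G.adjMatrix ℝ)})
            (sSup {t : ℝ | SPN ((Matrix.of fun _ _ => (1 : ℝ)) - t • H.adjMatrix ℝ)}) := by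
  classical
  obtain ⟨u, v, huv⟩ := hG
  obtain ⟨u', v', huv'⟩ := hH
  set SD : Set ℝ := {t : ℝ | SPN ((Matrix.of fun _ _ => (1 : ℝ))
      - t • (Matrix.fromBlocks (G.adjMatrix ℝ) 0 0 (H.adjMatrix ℝ)))} with hSD
  set SG : Set ℝ := {t : ℝ | SPN ((Matrix.of fun _ _ => (1 : ℝ)) - t • G.adjMatrix ℝ)} with hSG
  set SH : Set ℝ := {t : ℝ | SPN ((Matrix.of fun _ _ => (1 : ℝ)) - t • H.adjMatrix ℝ)} with hSH
  -- The key set identity: SD = SG ∩ SH.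
  have hsub : SD = SG ∩ SH := by
    ext t
    constructor
    · intro ht
      constructor
      · have h1 := spn_submatrix (Sum.inl : Fin m → Fin m ⊕ Fin p) ht
        have : (((Matrix.of fun _ _ => (1 : ℝ))
            - t • (Matrix.fromBlocks (G.adjMatrix ℝ) 0 0 (H.adjMatrix ℝ))).submatrix
              Sum.inl Sum.inl)
            = (Matrix.of fun _ _ => (1 : ℝ)) - t • G.adjMatrix ℝ := by
          ext i j; simp [Matrix.fromBlocks]
        rwa [this] at h1
      · have h1 := spn_submatrix (Sum.inr : Fin p → Fin m ⊕ Fin p) ht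
        have : (((Matrix.of fun _ _ => (1 : ℝ))
            - t • (Matrix.fromBlocks (G.adjMatrix ℝ) 0 0 (H.adjMatrix ℝ))).submatrix
              Sum.inr Sum.inr)
            = (Matrix.of fun _ _ => (1 : ℝ)) - t • H.adjMatrix ℝ := by
          ext i j; simp [Matrix.fromBlocks]
        rwa [this] at h1
    · rintro ⟨ht1, ht2⟩
      obtain ⟨P1, E1, h1, hP1, hE1, hEn1⟩ := ht1
      obtain ⟨P2, E2, h2, hP2, hE2, hEn2⟩ := ht2
      refine ⟨Matrix.fromBlocks P1 0 0 P2,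
        Matrix.fromBlocks E1 (Matrix.of fun _ _ => (1 : ℝ)) (Matrix.of fun _ _ => (1 : ℝ)) E2,
        ?_, ?_, ?_, ?_⟩
      · ext i j
        rcases i with i | i <;> rcases j with j | j
        · have := congrFun (congrFun h1 i) j
          simp only [Matrix.sub_apply, Matrix.smul_apply, Matrix.of_apply,
            Matrix.add_apply] at this ⊢
          simpa [Matrix.fromBlocks] using this
        · simp [Matrix.fromBlocks]
        · simp [Matrix.fromBlocks]
        · have := congrFun (congrFun h2 i) j
          simp only [Matrix.sub_apply, Matrix.smul_apply, Matrix.of_apply,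
            Matrix.add_apply] at this ⊢
          simpa [Matrix.fromBlocks] using this
      · refine Matrix.PosSemidef.of_dotProduct_mulVec_nonneg ?_ ?_
        · show _ = _
          rw [Matrix.fromBlocks_conjTranspose, hP1.1, hP2.1,
            Matrix.conjTranspose_zero, Matrix.conjTranspose_zero]
        · intro x
          have hxrw : x = Sum.elim (x ∘ Sum.inl) (x ∘ Sum.inr) := (Sum.elim_comp_inl_inr x).symm
          rw [hxrw, Matrix.fromBlocks_mulVec]
          simp only [Matrix.zero_mulVec, add_zero, zero_add, Sum.elim_comp_inl,
            Sum.elim_comp_inr]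
          have hstar : star (Sum.elim (x ∘ Sum.inl) (x ∘ Sum.inr))
              = Sum.elim (x ∘ Sum.inl) (x ∘ Sum.inr) := by
            ext i; rcases i with i | i <;> simp
          rw [hstar, sumElim_dotProduct_sumElim]
          have q1 := hP1.dotProduct_mulVec_nonneg (x ∘ Sum.inl)
          have q2 := hP2.dotProduct_mulVec_nonneg (x ∘ Sum.inr)
          simp only [star_trivial] at q1 q2
          exact add_nonneg q1 q2
      · refine Matrix.IsSymm.ext fun i j => ?_
        rcases i with i | i <;> rcases j with j | j <;>
          simp [Matrix.fromBlocks, hE1.apply, hE2.apply]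
      · intro i j
        rcases i with i | i <;> rcases j with j | j <;>
          simp [Matrix.fromBlocks, hEn1, hEn2]
  -- Basic facts about SG and SH.
  have hGsym := G.isSymm_adjMatrix (α := ℝ)
  have hHsym := H.isSymm_adjMatrix (α := ℝ)
  have hGn : ∀ i j, (0 : ℝ) ≤ G.adjMatrix ℝ i j := by
    intro i j; by_cases h : G.Adj i j <;> simp [h]
  have hHn : ∀ i j, (0 : ℝ) ≤ H.adjMatrix ℝ i j := by
    intro i j; by_cases h : H.Adj i j <;> simp [h]
  have hSGdc : ∀ s t : ℝ, s ≤ t → t ∈ SG → s ∈ SG := fun s t hst ht =>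
    spn_downward hGsym hGn hst ht
  have hSHdc : ∀ s t : ℝ, s ≤ t → t ∈ SH → s ∈ SH := fun s t hst ht =>
    spn_downward hHsym hHn hst ht
  have h1G : (1 : ℝ) ∈ SG := one_mem_spn G
  have h1H : (1 : ℝ) ∈ SH := one_mem_spn H
  have hGne : SG.Nonempty := ⟨1, h1G⟩
  have hHne : SH.Nonempty := ⟨1, h1H⟩
  have hGbdd : BddAbove SG := ⟨2, fun t ht => spn_le_two G huv ht⟩
  have hHbdd : BddAbove SH := ⟨2, fun t ht => spn_le_two H huv' ht⟩
  have hIne : (SG ∩ SH).Nonempty := ⟨1, h1G, h1H⟩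
  have hIbdd : BddAbove (SG ∩ SH) := ⟨2, fun t ht => spn_le_two G huv ht.1⟩
  rw [hsub]
  apply le_antisymm
  · exact le_min (csSup_le_csSup hGbdd hIne Set.inter_subset_left)
      (csSup_le_csSup hHbdd hIne Set.inter_subset_right)
  · refine le_of_forall_lt fun c hc => ?_
    set d : ℝ := (c + min (sSup SG) (sSup SH)) / 2 with hd
    have hcd : c < d := by simp only [hd]; linarith
    have hdmin : d < min (sSup SG) (sSup SH) := by simp only [hd]; cases min_cases (sSup SG) (sSup SH) <;> linarith
    have hdG : d ∈ SG := by
      obtain ⟨a, haS, hda⟩ := exists_lt_of_lt_csSup hGne (lt_of_lt_of_le hdmin (min_le_left _ _))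
      exact hSGdc d a hda.le haS
    have hdH : d ∈ SH := by
      obtain ⟨a, haS, hda⟩ := exists_lt_of_lt_csSup hHne (lt_of_lt_of_le hdmin (min_le_right _ _))
      exact hSHdc d a hda.le haS
    exact lt_of_lt_of_le hcd (le_csSup hIbdd ⟨hdG, hdH⟩)

end
end

section
/- Let A be a real n×n matrix with all entries nonnegative, and let B be the real symmetric matrix with B_ii = A_ii for all i and B_ij = −1 for all i ≠ j (i.e., B = diag(A) − J̊ with J̊ = J − I). Then the pair (A, B) is pairwise copositive if and only if for every vector t ∈ ℝ^n with all entries strictly positive one has Σ_i t_i/(t_i + (A t)_i) ≤ 1, where (A t)_i = Σ_j A_ij t_j. -/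
open Matrix
open scoped ComplexOrder

noncomputable section

lemma expr_re {n : ℕ} (A : Matrix (Fin n) (Fin n) ℝ) (v w : Fin n → ℂ) :
    (star (fun i => v i * star (v i)) ⬝ᵥ ((A.map Complex.ofReal) *ᵥ fun i => w i * star (w i))
        + star (fun i => v i * w i) ⬝ᵥ ((offd ((Matrix.of fun i j => if i = j then A i i else (-1 : ℝ)).map Complex.ofReal)) *ᵥ fun i => v i * w i)).re
    = (∑ i, ∑ j, Complex.normSq (v i) * A i j * Complex.normSq (w j))
      + ((∑ i, Complex.normSq (v i * w i)) - Complex.normSq (∑ i, v i * w i)) := by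
  have h1 : (star (fun i => v i * star (v i)) ⬝ᵥ ((A.map Complex.ofReal) *ᵥ fun i => w i * star (w i)))
      = ((∑ i, ∑ j, Complex.normSq (v i) * A i j * Complex.normSq (w j) : ℝ) : ℂ) := by
    simp only [dotProduct, mulVec, Pi.star_apply, Matrix.map_apply]
    push_cast
    refine Finset.sum_congr rfl fun i _ => ?_
    rw [Finset.mul_sum]
    refine Finset.sum_congr rfl fun j _ => ?_
    simp only [Complex.star_def, Complex.mul_conj]
    rw [Complex.conj_ofReal]
    ring
  set z : Fin n → ℂ := fun i => v i * w i with hz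
  have h2 : (star z ⬝ᵥ ((offd ((Matrix.of fun i j => if i = j then A i i else (-1 : ℝ)).map Complex.ofReal)) *ᵥ z))
      = (((∑ i, Complex.normSq (z i)) - Complex.normSq (∑ i, z i) : ℝ) : ℂ) := by
    have hoff : ∀ i, ((offd ((Matrix.of fun i j => if i = j then A i i else (-1 : ℝ)).map Complex.ofReal)) *ᵥ z) i
        = z i - ∑ j, z j := by
      intro i
      simp only [mulVec, dotProduct, offd, Matrix.of_apply, Matrix.map_apply]
      have key : ∀ j, (if i = j then (0:ℂ) else ((if i = j then A i i else (-1:ℝ) : ℝ) : ℂ)) * z j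
          = (if i = j then z j else 0) - z j := by
        intro j; by_cases h : i = j <;> simp [h]
      simp only [key, Finset.sum_sub_distrib, Finset.sum_ite_eq, Finset.mem_univ, if_pos]
    simp only [dotProduct, hoff, Pi.star_apply]
    have key2 : ∀ i, star (z i) * (z i - ∑ j, z j) = ((Complex.normSq (z i) : ℝ) : ℂ) - star (z i) * ∑ j, z j := by
      intro i
      rw [mul_sub, Complex.normSq_eq_conj_mul_self]
      rfl
    simp only [key2, Finset.sum_sub_distrib]
    rw [← Finset.sum_mul]
    have hs : (∑ i, star (z i)) = star (∑ i, z i) := by simp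
    rw [hs]
    simp only [Complex.star_def]
    rw [← Complex.normSq_eq_conj_mul_self]
    push_cast
    ring
  rw [h1, h2, ← Complex.ofReal_add, Complex.ofReal_re]

lemma sum_div_le {n : ℕ} (A : Matrix (Fin n) (Fin n) ℝ) (hApos : ∀ i j, 0 ≤ A i j)
    (H : ∀ t : Fin n → ℝ, (∀ i, 0 < t i) → ∑ i, t i / (t i + (A *ᵥ t) i) ≤ 1)
    (y : Fin n → ℝ) (hy : ∀ i, 0 ≤ y i) :
    ∑ i, y i / (y i + (A *ᵥ y) i) ≤ 1 := by
  set c : Fin n → ℝ := fun i => y i + (A *ᵥ y) i with hc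
  set K : Fin n → ℝ := fun i => 1 + ∑ j, A i j with hK
  have hAy : ∀ i, 0 ≤ (A *ᵥ y) i := fun i => by
    simp only [mulVec, dotProduct]
    exact Finset.sum_nonneg fun j _ => mul_nonneg (hApos i j) (hy j)
  have hcy : ∀ i, y i ≤ c i := fun i => le_add_of_nonneg_right (hAy i)
  have hc0 : ∀ i, 0 ≤ c i := fun i => le_trans (hy i) (hcy i)
  have hKpos : ∀ i, 0 < K i := fun i => by
    have : 0 ≤ ∑ j, A i j := Finset.sum_nonneg fun j _ => hApos i j
    simp only [hK]; linarith
  have hεbound : ∀ ε : ℝ, 0 < ε → ∑ i, y i / (c i + ε * K i) ≤ 1 := by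
    intro ε hε
    have ht : ∀ i, 0 < y i + ε := fun i => by have := hy i; linarith
    have := H (fun i => y i + ε) ht
    refine le_trans (Finset.sum_le_sum fun i _ => ?_) this
    have hden : (fun i => y i + ε) i + (A *ᵥ fun i => y i + ε) i = c i + ε * K i := by
      simp only [mulVec, dotProduct, hc, hK, mul_add, Finset.sum_add_distrib, Finset.mul_sum]
      rw [Finset.sum_congr rfl fun j (_ : j ∈ Finset.univ) => mul_comm ε (A i j)]
      ring
    rw [hden]
    have hdenpos : 0 < c i + ε * K i := by
      have h1 := hc0 i; have h2 : 0 < ε * K i := mul_pos hε (hKpos i); linarith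
    exact div_le_div_of_nonneg_right (by show y i ≤ y i + ε; linarith) hdenpos.le
  -- take limit ε → 0+
  have htend : Filter.Tendsto (fun ε : ℝ => ∑ i, y i / (c i + ε * K i)) (nhdsWithin 0 (Set.Ioi 0))
      (nhds (∑ i, y i / c i)) := by
    refine Filter.Tendsto.mono_left ?_ nhdsWithin_le_nhds
    refine tendsto_finset_sum _ fun i _ => ?_
    by_cases hyi : y i = 0
    · simp [hyi]
    · have hci : c i ≠ 0 := by
        have : 0 < y i := lt_of_le_of_ne (hy i) (Ne.symm hyi)
        exact ne_of_gt (lt_of_lt_of_le this (hcy i))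
      have hden : Filter.Tendsto (fun ε : ℝ => c i + ε * K i) (nhds 0) (nhds (c i)) := by
        have : Filter.Tendsto (fun ε : ℝ => ε * K i) (nhds 0) (nhds 0) := by
          simpa using (Filter.Tendsto.mul_const (K i) Filter.tendsto_id : Filter.Tendsto (fun ε : ℝ => ε * K i) (nhds 0) (nhds (0 * K i)))
        simpa using (tendsto_const_nhds.add this : Filter.Tendsto (fun ε : ℝ => c i + ε * K i) (nhds 0) (nhds (c i + 0)))
      exact Filter.Tendsto.div tendsto_const_nhds hden hci
  exact le_of_tendsto htend (Filter.eventually_iff_exists_mem.mpr ⟨Set.Ioi 0, self_mem_nhdsWithin, fun ε hε => hεbound ε hε⟩)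

lemma core_cs {n : ℕ} (x y c : Fin n → ℝ) (hx : ∀ i, 0 ≤ x i) (hy : ∀ i, 0 ≤ y i)
    (hyc : ∀ i, y i ≤ c i) (hsum : ∑ i, y i / c i ≤ 1) :
    (∑ i, Real.sqrt (x i * y i)) ^ 2 ≤ ∑ i, x i * c i := by
  have hc0 : ∀ i, 0 ≤ c i := fun i => le_trans (hy i) (hyc i)
  have hfg : ∀ i, Real.sqrt (x i * y i) = Real.sqrt (x i * c i) * Real.sqrt (y i / c i) := by
    intro i
    by_cases hci : c i = 0
    · have hyi : y i = 0 := le_antisymm (hci ▸ hyc i) (hy i)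
      simp [hci, hyi]
    · rw [← Real.sqrt_mul (mul_nonneg (hx i) (hc0 i))]
      congr 1
      field_simp
  calc (∑ i, Real.sqrt (x i * y i)) ^ 2
      = (∑ i, Real.sqrt (x i * c i) * Real.sqrt (y i / c i)) ^ 2 := by
        rw [Finset.sum_congr rfl fun i _ => hfg i]
    _ ≤ (∑ i, Real.sqrt (x i * c i) ^ 2) * ∑ i, Real.sqrt (y i / c i) ^ 2 :=
        Finset.sum_mul_sq_le_sq_mul_sq _ _ _
    _ = (∑ i, x i * c i) * ∑ i, y i / c i := by
        congr 1
        · exact Finset.sum_congr rfl fun i _ => Real.sq_sqrt (mul_nonneg (hx i) (hc0 i))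
        · exact Finset.sum_congr rfl fun i _ => Real.sq_sqrt (div_nonneg (hy i) (hc0 i))
    _ ≤ ∑ i, x i * c i := by
        refine mul_le_of_le_one_right ?_ hsum
        exact Finset.sum_nonneg fun i _ => mul_nonneg (hx i) (hc0 i)

theorem stmt17 {n : ℕ} (A : Matrix (Fin n) (Fin n) ℝ) (hApos : ∀ i j, 0 ≤ A i j) :
    PairCopos A ((Matrix.of fun i j => if i = j then A i i else (-1 : ℝ)).map Complex.ofReal)
      ↔ ∀ t : Fin n → ℝ, (∀ i, 0 < t i) → ∑ i, t i / (t i + (A *ᵥ t) i) ≤ 1 := by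
  constructor
  · intro hPC t ht
    set c : Fin n → ℝ := fun i => t i + (A *ᵥ t) i with hcdef
    have hAt : ∀ i, 0 ≤ (A *ᵥ t) i := fun i => by
      simp only [mulVec, dotProduct]
      exact Finset.sum_nonneg fun j _ => mul_nonneg (hApos i j) (ht j).le
    have hcpos : ∀ i, 0 < c i := fun i => add_pos_of_pos_of_nonneg (ht i) (hAt i)
    have key := hPC (fun i => ((Real.sqrt (t i) / c i : ℝ) : ℂ)) (fun i => ((Real.sqrt (t i) : ℝ) : ℂ))
    rw [expr_re] at key
    set S := ∑ i, t i / c i with hS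
    have e1 : ∀ i j, Complex.normSq (((Real.sqrt (t i) / c i : ℝ) : ℂ)) * A i j *
        Complex.normSq (((Real.sqrt (t j) : ℝ) : ℂ)) = t i / c i ^ 2 * (A i j * t j) := by
      intro i j
      rw [Complex.normSq_ofReal, Complex.normSq_ofReal, div_mul_div_comm,
        Real.mul_self_sqrt (ht i).le, Real.mul_self_sqrt (ht j).le]
      ring
    have e2 : ∀ i, ((Real.sqrt (t i) / c i : ℝ) : ℂ) * ((Real.sqrt (t i) : ℝ) : ℂ)
        = ((t i / c i : ℝ) : ℂ) := by
      intro i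
      rw [← Complex.ofReal_mul]
      congr 1
      rw [div_mul_eq_mul_div, Real.mul_self_sqrt (ht i).le]
    have e3 : (∑ i, ((Real.sqrt (t i) / c i : ℝ) : ℂ) * ((Real.sqrt (t i) : ℝ) : ℂ)) = ((S : ℝ) : ℂ) := by
      rw [Finset.sum_congr rfl fun i _ => e2 i, hS]
      push_cast
      rfl
    have e4 : (∑ i, ∑ j, Complex.normSq (((Real.sqrt (t i) / c i : ℝ) : ℂ)) * A i j *
        Complex.normSq (((Real.sqrt (t j) : ℝ) : ℂ)))
        + ∑ i, Complex.normSq (((Real.sqrt (t i) / c i : ℝ) : ℂ) * ((Real.sqrt (t i) : ℝ) : ℂ)) = S := by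
      simp only [e1]
      have : ∀ i, Complex.normSq (((Real.sqrt (t i) / c i : ℝ) : ℂ) * ((Real.sqrt (t i) : ℝ) : ℂ))
          = (t i / c i) ^ 2 := by
        intro i; rw [e2 i, Complex.normSq_ofReal]; ring
      simp only [this]
      rw [← Finset.sum_add_distrib, hS]
      refine Finset.sum_congr rfl fun i _ => ?_
      have hci : c i ≠ 0 := (hcpos i).ne'
      have hAti : (A *ᵥ t) i = c i - t i := by simp [hcdef]
      rw [← Finset.mul_sum]
      have : (∑ j, A i j * t j) = (A *ᵥ t) i := by simp [mulVec, dotProduct]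
      rw [this, hAti]
      field_simp
      ring
    rw [e3, Complex.normSq_ofReal] at key
    have key2 : 0 ≤ S - S * S := by
      have := e4
      nlinarith [key, e4]
    have hS0 : 0 ≤ S := Finset.sum_nonneg fun i _ => div_nonneg (ht i).le (hcpos i).le
    nlinarith [key2, hS0]
  · intro H v w
    rw [expr_re]
    set x : Fin n → ℝ := fun i => Complex.normSq (v i) with hxdef
    set y : Fin n → ℝ := fun i => Complex.normSq (w i) with hydef
    have hx : ∀ i, 0 ≤ x i := fun i => Complex.normSq_nonneg _
    have hy : ∀ i, 0 ≤ y i := fun i => Complex.normSq_nonneg _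
    set c : Fin n → ℝ := fun i => y i + (A *ᵥ y) i with hcdef
    have hAy : ∀ i, 0 ≤ (A *ᵥ y) i := fun i => by
      simp only [mulVec, dotProduct]
      exact Finset.sum_nonneg fun j _ => mul_nonneg (hApos i j) (hy j)
    have hyc : ∀ i, y i ≤ c i := fun i => le_add_of_nonneg_right (hAy i)
    have hsum : ∑ i, y i / c i ≤ 1 := sum_div_le A hApos H y hy
    have hCS : (∑ i, Real.sqrt (x i * y i)) ^ 2 ≤ ∑ i, x i * c i :=
      core_cs x y c hx hy hyc hsum
    have habs : Complex.normSq (∑ i, v i * w i) ≤ (∑ i, Real.sqrt (x i * y i)) ^ 2 := by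
      rw [← Complex.sq_norm]
      have h1 : ‖∑ i, v i * w i‖ ≤ ∑ i, Real.sqrt (x i * y i) := by
        refine le_trans (norm_sum_le _ _) (le_of_eq ?_)
        refine Finset.sum_congr rfl fun i _ => ?_
        rw [norm_mul, Complex.norm_def, Complex.norm_def, ← Real.sqrt_mul (Complex.normSq_nonneg _)]
      have h2 : 0 ≤ ‖∑ i, v i * w i‖ := norm_nonneg _
      exact pow_le_pow_left₀ h2 h1 2
    have hxc : (∑ i, ∑ j, x i * A i j * y j) + ∑ i, Complex.normSq (v i * w i) = ∑ i, x i * c i := by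
      have : ∀ i, Complex.normSq (v i * w i) = x i * y i := fun i => Complex.normSq_mul _ _
      simp only [this]
      rw [← Finset.sum_add_distrib]
      refine Finset.sum_congr rfl fun i _ => ?_
      simp only [hcdef, mulVec, dotProduct, mul_add, Finset.mul_sum]
      rw [add_comm]
      congr 1
      refine Finset.sum_congr rfl fun j _ => by ring
    linarith [hCS, habs, hxc]

end
end

section
/- Let a ∈ ℝ^n be a vector with all entries nonnegative, and let B be the real symmetric n×n matrix with B_ii = a_i for all i and B_ij = −1 for all i ≠ j. Then B is positive semidefinite if and only if Σ_{i=1}^n 1/(1 + a_i) ≤ 1. -/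
open Matrix
open scoped ComplexOrder

noncomputable section

theorem stmt18 {n : ℕ} (a : Fin n → ℝ) (ha : ∀ i, 0 ≤ a i) :
    (Matrix.of fun i j => if i = j then a i else (-1 : ℝ)).PosSemidef
      ↔ ∑ i, 1 / (1 + a i) ≤ 1 := by
  set M : Matrix (Fin n) (Fin n) ℝ := Matrix.of fun i j => if i = j then a i else (-1 : ℝ) with hM
  have hpos : ∀ i, (0:ℝ) < 1 + a i := fun i => by linarith [ha i]
  have key : ∀ x : Fin n → ℝ, star x ⬝ᵥ (M *ᵥ x)
      = ∑ i, (1 + a i) * x i ^ 2 - (∑ i, x i) ^ 2 := by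
    intro x
    have hrow : ∀ i, (M *ᵥ x) i = (1 + a i) * x i - ∑ j, x j := by
      intro i
      simp only [mulVec, dotProduct, hM, Matrix.of_apply]
      have : ∀ j, (if i = j then a i else (-1:ℝ)) * x j
          = (if i = j then (1 + a i) * x j else 0) - x j := by
        intro j; by_cases h : i = j <;> simp [h] <;> ring
      rw [Finset.sum_congr rfl fun j _ => this j, Finset.sum_sub_distrib,
        Finset.sum_ite_eq]
      simp
    have hstar : star x = x := by simp
    rw [hstar]
    simp only [dotProduct, hrow, mul_sub]
    rw [Finset.sum_sub_distrib, ← Finset.sum_mul]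
    congr 1
    · exact Finset.sum_congr rfl fun i _ => by ring
    · ring
  constructor
  · intro h
    have := h.dotProduct_mulVec_nonneg (fun i => 1 / (1 + a i))
    rw [key] at this
    have h1 : ∀ i, (1 + a i) * (1 / (1 + a i)) ^ 2 = 1 / (1 + a i) := by
      intro i
      have h0 : (1 + a i) ≠ 0 := (hpos i).ne'
      field_simp
    rw [Finset.sum_congr rfl fun i _ => h1 i] at this
    set s := ∑ i, 1 / (1 + a i)
    nlinarith
  · intro hs
    refine posSemidef_iff_dotProduct_mulVec.mpr ⟨?_, ?_⟩
    · ext i j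
      simp only [conjTranspose_apply, hM, Matrix.of_apply, star_trivial]
      by_cases h : i = j <;> simp [h, eq_comm]
    · intro x
      rw [key]
      have cs := Finset.sum_mul_sq_le_sq_mul_sq Finset.univ
        (fun i => 1 / Real.sqrt (1 + a i)) (fun i => Real.sqrt (1 + a i) * x i)
      have e1 : ∀ i, (1 / Real.sqrt (1 + a i)) * (Real.sqrt (1 + a i) * x i) = x i := by
        intro i
        have : Real.sqrt (1 + a i) ≠ 0 := Real.sqrt_ne_zero'.mpr (hpos i)
        field_simp
      have e2 : ∀ i, (1 / Real.sqrt (1 + a i)) ^ 2 = 1 / (1 + a i) := by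
        intro i
        rw [div_pow, one_pow, Real.sq_sqrt (hpos i).le]
      have e3 : ∀ i, (Real.sqrt (1 + a i) * x i) ^ 2 = (1 + a i) * x i ^ 2 := by
        intro i; rw [mul_pow, Real.sq_sqrt (hpos i).le]
      rw [Finset.sum_congr rfl fun i _ => e1 i, Finset.sum_congr rfl fun i _ => e2 i,
        Finset.sum_congr rfl fun i _ => e3 i] at cs
      have hq : 0 ≤ ∑ i, (1 + a i) * x i ^ 2 :=
        Finset.sum_nonneg fun i _ => mul_nonneg (hpos i).le (sq_nonneg _)
      nlinarith

end
end

section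
/- Let A be a real n×n matrix and B a complex Hermitian n×n matrix with A_ii = B_ii for all i. Define the n²×n² complex matrix X_{(A,B)}, indexed by pairs (i,j) of indices, by X_{(A,B)}((i,j),(k,l)) = A_ij if (k,l) = (i,j); X_{(A,B)}((i,j),(k,l)) = B_ij if i ≠ j, k = j and l = i; and 0 otherwise. Then the following are equivalent: (1) for every z ∈ ℂ^n, Re⟨z ⊗ z, X_{(A,B)} (z ⊗ z)⟩ ≥ 0, where z ⊗ z ∈ ℂ^{n×n} is the vector with entries (z ⊗ z)_{(i,j)} = z_i·z_j and ⟨x, y⟩ = Σ conj(x_α) y_α; (2) the real symmetric matrix A + Aᵀ + 2·Re(B̊) is copositive, where Re(B̊) is the entrywise real part of B̊ = B − diag(B). -/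
open Matrix
open scoped ComplexOrder

noncomputable section

/-- The bosonic quadratic form of `X_{(A,B)}` on `z ⊗ z` reduces to a double sum. -/
lemma stmt19_key {n : ℕ} (A : Matrix (Fin n) (Fin n) ℝ) (B : Matrix (Fin n) (Fin n) ℂ)
    (z : Fin n → ℂ) :
    (star (fun q : Fin n × Fin n => z q.1 * z q.2) ⬝ᵥ
              ((Matrix.of fun q r : Fin n × Fin n =>
                  if r = q then (A q.1 q.2 : ℂ)
                  else if q.1 ≠ q.2 ∧ r = (q.2, q.1) then B q.1 q.2 else 0)
                *ᵥ fun q : Fin n × Fin n => z q.1 * z q.2))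
    = ∑ i, ∑ j, (Complex.normSq (z i) * Complex.normSq (z j) : ℂ) * ((A i j : ℂ) + offd B i j) := by
  have hmv : ∀ q : Fin n × Fin n,
      ((Matrix.of fun q r : Fin n × Fin n =>
          if r = q then (A q.1 q.2 : ℂ)
          else if q.1 ≠ q.2 ∧ r = (q.2, q.1) then B q.1 q.2 else 0)
        *ᵥ fun q : Fin n × Fin n => z q.1 * z q.2) q
      = (A q.1 q.2 : ℂ) * (z q.1 * z q.2) + offd B q.1 q.2 * (z q.2 * z q.1) := by
    intro q
    rw [Matrix.mulVec]
    show (∑ r, (if r = q then (A q.1 q.2 : ℂ)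
          else if q.1 ≠ q.2 ∧ r = (q.2, q.1) then B q.1 q.2 else 0) * (z r.1 * z r.2)) = _
    have hsplit : ∀ r : Fin n × Fin n,
        (if r = q then (A q.1 q.2 : ℂ)
          else if q.1 ≠ q.2 ∧ r = (q.2, q.1) then B q.1 q.2 else 0) * (z r.1 * z r.2)
        = (if r = q then (A q.1 q.2 : ℂ) * (z r.1 * z r.2) else 0)
          + (if r = (q.2, q.1) then offd B q.1 q.2 * (z r.1 * z r.2) else 0) := by
      intro r
      by_cases hq : q.1 = q.2
      · by_cases hr : r = q
        · subst hr
          simp [offd, hq, Prod.ext_iff]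
        · by_cases hr2 : r = (q.2, q.1)
          · simp [hr, hr2, offd, hq]
          · simp [hr, hr2, offd, hq]
      · have hne : q ≠ (q.2, q.1) := by
          intro h; exact hq (congrArg Prod.fst h)
        by_cases hr : r = q
        · simp [hr, hne, offd, hq]
        · by_cases hr2 : r = (q.2, q.1)
          · simp [hr, hr2, offd, hq, Ne.symm hq, hne.symm]
          · simp [hr, hr2, offd, hq]
    rw [Finset.sum_congr rfl (fun r _ => hsplit r), Finset.sum_add_distrib,
      Finset.sum_ite_eq' Finset.univ q, Finset.sum_ite_eq' Finset.univ (q.2, q.1)]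
    simp
  rw [dotProduct]
  rw [Finset.sum_congr rfl (fun q _ => by rw [hmv q])]
  rw [← Fintype.sum_prod_type']
  apply Finset.sum_congr rfl
  intro q _
  obtain ⟨i, j⟩ := q
  simp only [Pi.star_apply, star_mul', mul_add, RCLike.star_def]
  have h1 : (starRingEnd ℂ) (z i) * (starRingEnd ℂ) (z j) * ((A i j : ℂ) * (z i * z j))
      = (Complex.normSq (z i) * Complex.normSq (z j) : ℂ) * (A i j : ℂ) := by
    rw [← Complex.mul_conj, ← Complex.mul_conj]; push_cast; ring
  have h2 : (starRingEnd ℂ) (z i) * (starRingEnd ℂ) (z j) * (offd B i j * (z j * z i))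
      = (Complex.normSq (z i) * Complex.normSq (z j) : ℂ) * offd B i j := by
    rw [← Complex.mul_conj, ← Complex.mul_conj]; push_cast; ring
  rw [h1, h2]

theorem stmt19 {n : ℕ} (A : Matrix (Fin n) (Fin n) ℝ) (B : Matrix (Fin n) (Fin n) ℂ)
    (hB : B.IsHermitian) (hdiag : ∀ i, (A i i : ℂ) = B i i) :
    (∀ z : Fin n → ℂ,
        0 ≤ (star (fun q : Fin n × Fin n => z q.1 * z q.2) ⬝ᵥ
              ((Matrix.of fun q r : Fin n × Fin n =>
                  if r = q then (A q.1 q.2 : ℂ)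
                  else if q.1 ≠ q.2 ∧ r = (q.2, q.1) then B q.1 q.2 else 0)
                *ᵥ fun q : Fin n × Fin n => z q.1 * z q.2)).re)
      ↔ Copositive (A + Aᵀ + (2 : ℝ) • ((offd B).map Complex.re)) := by
  set R : Matrix (Fin n) (Fin n) ℝ := (offd B).map Complex.re with hR
  -- real part of the quadratic form
  have hre : ∀ z : Fin n → ℂ,
      (star (fun q : Fin n × Fin n => z q.1 * z q.2) ⬝ᵥ
              ((Matrix.of fun q r : Fin n × Fin n =>
                  if r = q then (A q.1 q.2 : ℂ)
                  else if q.1 ≠ q.2 ∧ r = (q.2, q.1) then B q.1 q.2 else 0)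
                *ᵥ fun q : Fin n × Fin n => z q.1 * z q.2)).re
      = ∑ i, ∑ j, Complex.normSq (z i) * Complex.normSq (z j) * (A i j + R i j) := by
    intro z
    rw [stmt19_key A B z, Complex.re_sum]
    apply Finset.sum_congr rfl
    intro i _
    rw [Complex.re_sum]
    apply Finset.sum_congr rfl
    intro j _
    rw [show ((Complex.normSq (z i) : ℂ) * (Complex.normSq (z j) : ℂ))
        = ((Complex.normSq (z i) * Complex.normSq (z j) : ℝ) : ℂ) by push_cast; ring,
      Complex.re_ofReal_mul, Complex.add_re, Complex.ofReal_re]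
    rfl
  -- quadratic form of M
  have hM : ∀ x : Fin n → ℝ, x ⬝ᵥ ((A + Aᵀ + (2 : ℝ) • R) *ᵥ x)
      = 2 * ∑ i, ∑ j, x i * x j * (A i j + R i j) := by
    intro x
    have step : ∀ i, x i * ((A + Aᵀ + (2 : ℝ) • R) *ᵥ x) i
        = (∑ j, x i * x j * A i j) + ((∑ j, x i * x j * A j i)
          + ∑ j, 2 * (x i * x j * R i j)) := by
      intro i
      rw [Matrix.mulVec, dotProduct, Finset.mul_sum,
        ← Finset.sum_add_distrib, ← Finset.sum_add_distrib]
      apply Finset.sum_congr rfl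
      intro j _
      simp only [Matrix.add_apply, Matrix.smul_apply, Matrix.transpose_apply, smul_eq_mul]
      ring
    rw [dotProduct, Finset.sum_congr rfl (fun i _ => step i),
      Finset.sum_add_distrib, Finset.sum_add_distrib]
    have hswap : (∑ i, ∑ j, x i * x j * A j i) = ∑ i, ∑ j, x i * x j * A i j := by
      rw [Finset.sum_comm]
      apply Finset.sum_congr rfl; intro i _
      apply Finset.sum_congr rfl; intro j _
      ring
    rw [hswap]
    rw [Finset.mul_sum]
    rw [← Finset.sum_add_distrib, ← Finset.sum_add_distrib]
    apply Finset.sum_congr rfl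
    intro i _
    rw [Finset.mul_sum, ← Finset.sum_add_distrib, ← Finset.sum_add_distrib]
    exact Finset.sum_congr rfl fun j _ => by ring
  constructor
  · intro h x hx
    have hz := le_of_le_of_eq (h (fun i => ((Real.sqrt (x i) : ℝ) : ℂ)))
      (hre (fun i => ((Real.sqrt (x i) : ℝ) : ℂ)))
    have hns : ∀ i, Complex.normSq ((Real.sqrt (x i) : ℝ) : ℂ) = x i := by
      intro i
      rw [Complex.normSq_ofReal, Real.mul_self_sqrt (hx i)]
    simp only [hns] at hz
    rw [hM]
    linarith
  · intro h z
    rw [hre]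
    have := h (fun i => Complex.normSq (z i)) (fun i => Complex.normSq_nonneg (z i))
    rw [hM] at this
    linarith

end
end
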